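/- Let T be a tree which is not a star and which has two pendant edges sharing a common endpoint. Then T has at least four vertices that are pairwise distinct, v_i, v_p, v_q, v_k, such that the pairs (v_p, v_i), (v_q, v_i), (v_p, v_k), (v_q, v_k) are all maximally matchable; consequently the group inverse graph T# contains a 4-cycle and is not a tree. -/

import Mathlib

open SimpleGraph

/-- `X` is the group inverse of `A`. -/
def IsGroupInverse {n : Type*} [Fintype n] (A X : Matrix n n ℝ) : Prop :=
  A * X * A = A ∧ X * A * X = X ∧ A * X = X * A

/-- A matching of a graph: a set of pairwise non-incident edges. -/
def IsMatching {V : Type*} (G : SimpleGraph V) (M : Finset (Sym2 V)) : Prop :=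
  (↑M : Set (Sym2 V)) ⊆ G.edgeSet ∧
    ∀ e ∈ M, ∀ f ∈ M, e ≠ f → ∀ v : V, ¬(v ∈ e ∧ v ∈ f)

/-- A maximum matching: a matching of maximum cardinality. -/
def IsMaxMatching {V : Type*} (G : SimpleGraph V) (M : Finset (Sym2 V)) : Prop :=
  IsMatching G M ∧ ∀ N : Finset (Sym2 V), IsMatching G N → N.card ≤ M.card

/-- A nonempty list of edges alternately in and out of `M`,
beginning and ending with edges of `M`. -/
def IsAltEdgeList {V : Type*} (M : Set (Sym2 V)) : List (Sym2 V) → Prop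
  | [] => False
  | [e] => e ∈ M
  | e :: f :: rest => e ∈ M ∧ f ∉ M ∧ IsAltEdgeList M rest

/-- A pair of vertices is maximally matchable if they are joined by a path that is
alternating with respect to some maximum matching. -/
def MaxMatchable {V : Type*} (G : SimpleGraph V) (u v : V) : Prop :=
  ∃ (p : G.Walk u v) (M : Finset (Sym2 V)),
    p.IsPath ∧ IsMaxMatching G M ∧ IsAltEdgeList (↑M) p.edges

/-- `G` is a star: some center `c` is adjacent to exactly the other vertices,
and there are no other edges. -/
def IsStar {V : Type*} (G : SimpleGraph V) : Prop :=
  ∃ c : V, ∀ u v : V, G.Adj u v ↔ ((u = c ∧ v ≠ c) ∨ (v = c ∧ u ≠ c))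

/-- The class 𝕋: trees with at least one non-pendant vertex in which every
non-pendant vertex is adjacent to a pendant vertex. -/
def InClassT {V : Type*} [Fintype V] (T : SimpleGraph V) [DecidableRel T.Adj] : Prop :=
  T.IsTree ∧ (∃ v, T.degree v ≠ 1) ∧
    ∀ v, T.degree v ≠ 1 → ∃ u, T.Adj v u ∧ T.degree u = 1

/-- The number of pendant neighbours of `v`. -/
def pendantNbrs {V : Type*} [Fintype V] [DecidableEq V] (T : SimpleGraph V)
    [DecidableRel T.Adj] (v : V) : ℕ :=
  ((T.neighborFinset v).filter fun u => T.degree u = 1).card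

/-!
The four vertices are the common neighbour `c` of the leaves `p`, `q` and a vertex `k'` at
distance two from `c`, which exists because `T` is not a star. Matching a vertex `a` missed by a
maximum matching to a neighbour `b`, and dropping the matching edge at `b`, keeps the matching
maximum. Starting from any maximum matching, this yields one containing `pc` and an edge `xk'`
with `x` a neighbour of `c`; trading `pc` for `qc` yields another one. The paths `pc`, `qc`,
`pcxk'` and `qcxk'` are then alternating, so `p c q k'` is a 4-cycle of `T#`.
-/

namespace SimpleGraph

variable {V : Type*} {G : SimpleGraph V}

theorem exists_adj_adj_ne_of_not_isStar (hG : G.Preconnected) (hstar : ¬IsStar G) (c : V) :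
    ∃ x k, G.Adj c x ∧ G.Adj x k ∧ k ≠ c := by
  by_contra! h
  have adj_center : ∀ u, u ≠ c → G.Adj c u := by
    have key : ∀ u (w : G.Walk u c), u = c ∨ G.Adj c u := by
      intro u w
      induction w with
      | nil => exact Or.inl rfl
      | cons hab _ ih =>
        rcases ih h with rfl | hc
        · exact Or.inr hab.symm
        · exact Or.inl (h _ _ hc hab.symm)
    exact fun u hu => (key u (hG u c).some).resolve_left hu
  refine hstar ⟨c, fun u v => ⟨fun huv => ?_, ?_⟩⟩
  · by_cases hu : u = c
    · exact Or.inl ⟨hu, hu ▸ huv.ne'⟩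
    · exact Or.inr ⟨h u v (adj_center u hu) huv, hu⟩
  · rintro (⟨rfl, hv⟩ | ⟨rfl, hu⟩)
    exacts [adj_center v hv, (adj_center u hu).symm]

theorem eq_of_adj_of_degree_eq_one {p c y : V} [Fintype (G.neighborSet p)]
    (hp : G.degree p = 1) (hc : G.Adj p c) (hy : G.Adj p y) : y = c :=
  (degree_eq_one_iff_existsUnique_adj.mp hp).unique hy hc

theorem IsAcyclic.eq_of_adj_of_adj (hG : G.IsAcyclic) {a b c d : V} (hac : a ≠ c)
    (hab : G.Adj a b) (hbc : G.Adj b c) (had : G.Adj a d) (hdc : G.Adj d c) : b = d := by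
  have hpath : ∀ {m} (ham : G.Adj a m) (hmc : G.Adj m c),
      (Walk.cons ham (Walk.cons hmc Walk.nil)).IsPath := fun ham hmc => by
    simp [ham.ne, hmc.ne, hac]
  have := congrArg (fun P : G.Path a c => P.1.support)
    ((hG.subsingleton_path a c).elim ⟨_, hpath hab hbc⟩ ⟨_, hpath had hdc⟩)
  simpa using this

end SimpleGraph

section Matching

variable {V : Type*} {G : SimpleGraph V} {M : Finset (Sym2 V)}

theorem IsMatching.eq_of_mem_of_mem (hM : IsMatching G M) {e f : Sym2 V} {v : V}
    (he : e ∈ M) (hf : f ∈ M) (hve : v ∈ e) (hvf : v ∈ f) : e = f := by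
  by_contra hef
  exact hM.2 e he f hf hef v ⟨hve, hvf⟩

theorem IsMatching.eq_of_mk_mem_of_mk_mem (hM : IsMatching G M) {a b c : V}
    (hb : s(a, b) ∈ M) (hc : s(a, c) ∈ M) : b = c :=
  Sym2.congr_right.mp (hM.eq_of_mem_of_mem hb hc (Sym2.mem_mk_left a b) (Sym2.mem_mk_left a c))

theorem IsMatching.subset {N : Finset (Sym2 V)} (hM : IsMatching G M) (hNM : N ⊆ M) :
    IsMatching G N :=
  ⟨fun _ he => hM.1 (hNM he), fun e he f hf => hM.2 e (hNM he) f (hNM hf)⟩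

theorem IsMatching.insert [DecidableEq V] (hM : IsMatching G M) {a b : V} (hab : G.Adj a b)
    (ha : ∀ e ∈ M, a ∉ e) (hb : ∀ e ∈ M, b ∉ e) : IsMatching G (insert s(a, b) M) := by
  have hfree : ∀ e ∈ M, ∀ v ∈ s(a, b), v ∉ e := by
    rintro e he v hv
    rcases Sym2.mem_iff.mp hv with rfl | rfl
    exacts [ha e he, hb e he]
  refine ⟨?_, ?_⟩
  · rw [Finset.coe_insert, Set.insert_subset_iff]
    exact ⟨hab, hM.1⟩
  · simp only [Finset.mem_insert]
    rintro e (rfl | he) f (rfl | hf) hef v ⟨hve, hvf⟩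
    exacts [hef rfl, hfree f hf v hve hvf, hfree e he v hvf hve,
      hM.2 e he f hf hef v ⟨hve, hvf⟩]

theorem IsMatching.card_filter_mem_le_one [DecidableEq V] (hM : IsMatching G M) (v : V) :
    (M.filter (v ∈ ·)).card ≤ 1 := by
  refine Finset.card_le_one.mpr fun e he f hf => ?_
  rw [Finset.mem_filter] at he hf
  exact hM.eq_of_mem_of_mem he.1 hf.1 he.2 hf.2

theorem exists_isMaxMatching [Finite V] (G : SimpleGraph V) : ∃ M, IsMaxMatching G M := by
  obtain ⟨M, hM, hmax⟩ := Set.exists_max_image {M | IsMatching G M} Finset.card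
    (Set.toFinite _) ⟨∅, by simp [IsMatching]⟩
  exact ⟨M, hM, hmax⟩

theorem IsMaxMatching.exchange [DecidableEq V] (hM : IsMaxMatching G M) {a b : V}
    (hab : G.Adj a b) (ha : ∀ e ∈ M, a ∉ e) :
    IsMaxMatching G (insert s(a, b) (M.filter (b ∉ ·))) := by
  have hM' : IsMatching G (insert s(a, b) (M.filter (b ∉ ·))) :=
    (hM.1.subset (Finset.filter_subset _ M)).insert hab
      (fun e he => ha e (Finset.mem_filter.mp he).1) (fun e he => (Finset.mem_filter.mp he).2)
  have hcard : M.card ≤ (insert s(a, b) (M.filter (b ∉ ·))).card := by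
    rw [Finset.card_insert_of_notMem (by simp)]
    have := Finset.card_filter_add_card_filter_not (s := M) (b ∈ ·)
    have := hM.1.card_filter_mem_le_one b
    omega
  exact ⟨hM', fun N hN => (hM.2 N hN).trans hcard⟩

theorem IsMaxMatching.exists_mk_mem (hM : IsMaxMatching G M) {x k : V} (hxk : G.Adj x k) :
    ∃ M', IsMaxMatching G M' ∧ (∀ e ∈ M, k ∉ e → e ∈ M') ∧
      ∃ y, s(x, y) ∈ M' := by
  classical
  by_cases hx : ∃ e ∈ M, x ∈ e
  · obtain ⟨e, he, hxe⟩ := hx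
    obtain ⟨y, rfl⟩ := Sym2.mem_iff_exists.mp hxe
    exact ⟨M, hM, fun e he _ => he, y, he⟩
  · push Not at hx
    refine ⟨_, hM.exchange hxk hx, fun e he hke => ?_, k, Finset.mem_insert_self _ _⟩
    exact Finset.mem_insert_of_mem (Finset.mem_filter.mpr ⟨he, hke⟩)

theorem IsMaxMatching.exists_mk_mem_of_degree_eq_one (hM : IsMaxMatching G M) {p c : V}
    [Fintype (G.neighborSet p)] (hp : G.degree p = 1) (hpc : G.Adj p c) :
    ∃ M', IsMaxMatching G M' ∧ (∀ e ∈ M, c ∉ e → e ∈ M') ∧ s(p, c) ∈ M' := by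
  obtain ⟨M', hM', hkeep, y, hy⟩ := hM.exists_mk_mem hpc
  obtain rfl : y = c := eq_of_adj_of_degree_eq_one hp hpc (hM'.1.1 hy)
  exact ⟨M', hM', hkeep, hy⟩

theorem exists_isMaxMatching_mk_mem_mk_mem_of_degree_eq_one [Finite V] {p c x k : V}
    [Fintype (G.neighborSet p)] (hp : G.degree p = 1) (hpc : G.Adj p c) (hxk : G.Adj x k)
    (hxp : x ≠ p) (hkp : k ≠ p) (hkc : k ≠ c) :
    ∃ M k', IsMaxMatching G M ∧ s(p, c) ∈ M ∧ s(x, k') ∈ M ∧ k' ≠ c := by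
  obtain ⟨M₀, hM₀⟩ := exists_isMaxMatching G
  obtain ⟨M, hM, -, hpcM⟩ := hM₀.exists_mk_mem_of_degree_eq_one hp hpc
  obtain ⟨M', hM', hkeep, k', hxk'⟩ := hM.exists_mk_mem hxk
  have hpcM' : s(p, c) ∈ M' := hkeep _ hpcM (by simp [hkc, hkp])
  refine ⟨M', k', hM', hpcM', hxk', ?_⟩
  rintro rfl
  exact hxp (hM'.1.eq_of_mk_mem_of_mk_mem (Sym2.eq_swap ▸ hxk') (Sym2.eq_swap ▸ hpcM'))

theorem IsMaxMatching.maxMatchable_of_mk_mem (hM : IsMaxMatching G M) {u v : V}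
    (h : s(u, v) ∈ M) : MaxMatchable G u v := by
  have huv : G.Adj u v := hM.1.1 h
  exact ⟨Walk.cons huv Walk.nil, M, by simp [huv.ne], hM, h⟩

theorem IsMaxMatching.maxMatchable_of_mem_of_notMem_of_mem (hM : IsMaxMatching G M)
    {u a b v : V} (hua : s(u, a) ∈ M) (hab : G.Adj a b) (hab' : s(a, b) ∉ M)
    (hbv : s(b, v) ∈ M) : MaxMatchable G u v := by
  have hua' : G.Adj u a := hM.1.1 hua
  have hbv' : G.Adj b v := hM.1.1 hbv
  have hub : u ≠ b := by rintro rfl; exact hab' (Sym2.eq_swap ▸ hua)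
  have hav : a ≠ v := by rintro rfl; exact hab' (Sym2.eq_swap ▸ hbv)
  have huv : u ≠ v := by
    rintro rfl
    exact hab.ne (hM.1.eq_of_mk_mem_of_mk_mem hua (Sym2.eq_swap ▸ hbv))
  refine ⟨Walk.cons hua' (Walk.cons hab (Walk.cons hbv' Walk.nil)), M, ?_, hM, hua, hab', hbv⟩
  simp [hua'.ne, hab.ne, hbv'.ne, hub, hav, huv]

end Matching

theorem two_adjacent_pendant_edges_not_tree {V : Type*} [Fintype V]
    (T : SimpleGraph V) [DecidableRel T.Adj]
    (hT : T.IsTree) (hstar : ¬ IsStar T)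
    (c p q : V) (hpq : p ≠ q) (hcp : T.Adj c p) (hcq : T.Adj c q)
    (hp : T.degree p = 1) (hq : T.degree q = 1) :
    (∃ vi vp vq vk : V, [vi, vp, vq, vk].Pairwise (· ≠ ·) ∧
      MaxMatchable T vp vi ∧ MaxMatchable T vq vi ∧
      MaxMatchable T vp vk ∧ MaxMatchable T vq vk) ∧
    ¬ (SimpleGraph.fromRel (MaxMatchable T)).IsTree := by
  obtain ⟨x, k, hcx, hxk, hkc⟩ :=
    exists_adj_adj_ne_of_not_isStar hT.connected.preconnected hstar c
  have not_adj_of_pendant {r y : V} (hr : T.degree r = 1) (hcr : T.Adj c r) (hy : y ≠ c) :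
      ¬T.Adj r y := fun hry => hy (eq_of_adj_of_degree_eq_one hr hcr.symm hry)
  have hxp : x ≠ p := by rintro rfl; exact not_adj_of_pendant hp hcp hkc hxk
  have hxq : x ≠ q := by rintro rfl; exact not_adj_of_pendant hq hcq hkc hxk
  have hkp : k ≠ p := by rintro rfl; exact not_adj_of_pendant hp hcp hcx.ne' hxk.symm
  obtain ⟨M₁, k', hM₁, hpcM₁, hxk'M₁, hk'c⟩ :=
    exists_isMaxMatching_mk_mem_mk_mem_of_degree_eq_one hp hcp.symm hxk hxp hkp hkc
  obtain ⟨M₂, hM₂, hkeep, hqcM₂⟩ := hM₁.exists_mk_mem_of_degree_eq_one hq hcq.symm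
  have hxk'M₂ : s(x, k') ∈ M₂ := hkeep _ hxk'M₁ (by simp [hcx.ne, hk'c.symm])
  have hcxM₁ : s(c, x) ∉ M₁ := fun h =>
    hxp (hM₁.1.eq_of_mk_mem_of_mk_mem h (Sym2.eq_swap ▸ hpcM₁))
  have hcxM₂ : s(c, x) ∉ M₂ := fun h =>
    hxq (hM₂.1.eq_of_mk_mem_of_mk_mem h (Sym2.eq_swap ▸ hqcM₂))
  have hk'x : T.Adj x k' := hM₁.1.1 hxk'M₁
  have hk'p : k' ≠ p := by rintro rfl; exact not_adj_of_pendant hp hcp hcx.ne' hk'x.symm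
  have hk'q : k' ≠ q := by rintro rfl; exact not_adj_of_pendant hq hcq hcx.ne' hk'x.symm
  have hpc := hM₁.maxMatchable_of_mk_mem hpcM₁
  have hqc := hM₂.maxMatchable_of_mk_mem hqcM₂
  have hpk' := hM₁.maxMatchable_of_mem_of_notMem_of_mem hpcM₁ hcx hcxM₁ hxk'M₁
  have hqk' := hM₂.maxMatchable_of_mem_of_notMem_of_mem hqcM₂ hcx hcxM₂ hxk'M₂
  refine ⟨⟨c, p, q, k', ?_, hpc, hqc, hpk', hqk'⟩, fun htree => hk'c.symm ?_⟩
  · simp [hcp.ne, hcq.ne, hk'c.symm, hpq, hk'p.symm, hk'q.symm]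
  · have adj {u v : V} (huv : u ≠ v) (h : MaxMatchable T u v) :
        (fromRel (MaxMatchable T)).Adj u v := (fromRel_adj _ _ _).mpr ⟨huv, .inl h⟩
    exact htree.isAcyclic.eq_of_adj_of_adj hpq (adj hcp.ne' hpc) (adj hcq.ne' hqc).symm
      (adj hk'p.symm hpk') (adj hk'q.symm hqk').symm
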